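/- arXiv:1812.04573 — 3 statements merged into one kernel-verified Lean document; each statement's English description precedes it below -/
import Mathlib

section
/- As formal power series (or for |x_i| < 1), the following identity holds: Σ_{σ ∈ S_3} 1/((1 - x_{σ(1)})(1 - x_{σ(1)} x_{σ(2)})(1 - x_{σ(1)} x_{σ(2)} x_{σ(3)})) = 2/(1 - x_1 x_2 x_3) + 1/((1-x_1 x_2)(1-x_3)) + 1/((1-x_1 x_3)(1-x_2)) + 1/((1-x_2 x_3)(1-x_1)) + 1/((1-x_1)(1-x_2)(1-x_3)). -/
/-! Both sides are rational functions in `x 0, x 1, x 2` whose denominators are products of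
`1 - ∏_{i ∈ S} x i` over nonempty `S ⊆ {0, 1, 2}`. These are nonzero when every `|x i| < 1`,
and the identity then follows by expanding the sum over `S₃` into its six terms and clearing
denominators. -/

open Finset Equiv

theorem Equiv.Perm.sum_fin_three {M : Type*} [AddCommMonoid M] (g : Fin 3 → Fin 3 → Fin 3 → M) :
    ∑ σ : Perm (Fin 3), g (σ 0) (σ 1) (σ 2) =
      g 0 1 2 + g 0 2 1 + g 1 0 2 + g 1 2 0 + g 2 0 1 + g 2 1 0 := by
  have huniv : (univ : Finset (Perm (Fin 3))) =
      {1, swap 1 2, swap 0 1, swap 0 1 * swap 1 2, swap 1 2 * swap 0 1, swap 0 2} := by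
    decide
  rw [huniv, sum_insert (by decide), sum_insert (by decide), sum_insert (by decide),
    sum_insert (by decide), sum_insert (by decide), sum_singleton]
  simp [add_assoc, swap_apply_def]

theorem macmahon_rational_identity_three {K : Type*} [Field K] {a b c : K}
    (ha : 1 - a ≠ 0) (hb : 1 - b ≠ 0) (hc : 1 - c ≠ 0) (hab : 1 - a * b ≠ 0)
    (hac : 1 - a * c ≠ 0) (hbc : 1 - b * c ≠ 0) (habc : 1 - a * b * c ≠ 0) :
    1 / ((1 - a) * (1 - a * b) * (1 - a * b * c)) + 1 / ((1 - a) * (1 - a * c) * (1 - a * c * b))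
      + 1 / ((1 - b) * (1 - b * a) * (1 - b * a * c))
      + 1 / ((1 - b) * (1 - b * c) * (1 - b * c * a))
      + 1 / ((1 - c) * (1 - c * a) * (1 - c * a * b))
      + 1 / ((1 - c) * (1 - c * b) * (1 - c * b * a)) =
    2 / (1 - a * b * c) + 1 / ((1 - a * b) * (1 - c)) + 1 / ((1 - a * c) * (1 - b))
      + 1 / ((1 - b * c) * (1 - a)) + 1 / ((1 - a) * (1 - b) * (1 - c)) := by
  rw [mul_comm b a, mul_comm c a, mul_comm c b, mul_right_comm a c b, ← mul_rotate a b c]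
  field_simp
  ring

theorem one_sub_ne_zero_of_abs_lt_one {R : Type*} [Ring R] [LinearOrder R] {a : R}
    (ha : |a| < 1) : 1 - a ≠ 0 :=
  sub_ne_zero.2 ((le_abs_self a).trans_lt ha).ne'

theorem abs_mul_lt_one {R : Type*} [Ring R] [LinearOrder R] [IsStrictOrderedRing R] {a b : R}
    (ha : |a| < 1) (hb : |b| ≤ 1) : |a * b| < 1 := by
  rw [abs_mul]
  exact mul_lt_one_of_nonneg_of_lt_one_left (abs_nonneg a) ha hb

theorem macmahon_multivariate_k3 (x : Fin 3 → ℝ) (hx : ∀ i, |x i| < 1) :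
    ∑ σ : Equiv.Perm (Fin 3),
        1 / ((1 - x (σ 0)) * (1 - x (σ 0) * x (σ 1)) * (1 - x (σ 0) * x (σ 1) * x (σ 2))) =
      2 / (1 - x 0 * x 1 * x 2)
        + 1 / ((1 - x 0 * x 1) * (1 - x 2))
        + 1 / ((1 - x 0 * x 2) * (1 - x 1))
        + 1 / ((1 - x 1 * x 2) * (1 - x 0))
        + 1 / ((1 - x 0) * (1 - x 1) * (1 - x 2)) := by
  have hx2 (i j : Fin 3) : |x i * x j| < 1 := abs_mul_lt_one (hx i) (hx j).le
  have hx3 : |x 0 * x 1 * x 2| < 1 := abs_mul_lt_one (hx2 0 1) (hx 2).le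
  rw [Perm.sum_fin_three fun i j k => 1 / ((1 - x i) * (1 - x i * x j) * (1 - x i * x j * x k))]
  exact macmahon_rational_identity_three (one_sub_ne_zero_of_abs_lt_one (hx 0))
    (one_sub_ne_zero_of_abs_lt_one (hx 1)) (one_sub_ne_zero_of_abs_lt_one (hx 2))
    (one_sub_ne_zero_of_abs_lt_one (hx2 0 1)) (one_sub_ne_zero_of_abs_lt_one (hx2 0 2))
    (one_sub_ne_zero_of_abs_lt_one (hx2 1 2)) (one_sub_ne_zero_of_abs_lt_one hx3)
end

section
/- As formal power series in x_1, ..., x_k, Σ_{σ ∈ S_k} σ(1/((1-x_1)(1-x_1x_2)···(1-x_1x_2···x_k))) = Σ over all k-tuples γ ∈ ℕ^k of (∏_{j≥0} f_j(γ)!)·x_1^{γ_1}···x_k^{γ_k}, where f_j(γ) is the number of entries of γ equal to j; i.e., the coefficient of x_1^{γ_1}···x_k^{γ_k} in the symmetrized sum is ∏_j f_j(γ)!. -/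
/-! Write `m_j` for the exponent of `x_{σ 1} ⋯ x_{σ j}`. Expanding each factor as a geometric
series, the coefficient of `x^γ` in the `σ`-term counts the `c : Fin k → ℕ` with
`∑ c_j m_j = γ`, i.e. whose tail sums `c_i + ⋯ + c_k` are `γ (σ i)`. Tail sums determine `c` and
take exactly the antitone values, so the `σ`-term contributes `1` if `γ ∘ σ` is antitone and `0`
otherwise. The permutations sorting `γ` decreasingly form a coset of the stabiliser of `γ`, which
has `∏_j f_j(γ)!` elements. -/

open Finset MvPowerSeries Order

section Geometric

variable {σ K : Type*} [Field K] {m : σ →₀ ℕ}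

lemma exists_nsmul_eq_iff_of_ne_zero {n : σ →₀ ℕ} (hn : n ≠ 0) :
    (∃ c : ℕ, c • m = n) ↔ m ≤ n ∧ ∃ c : ℕ, c • m = n - m := by
  constructor
  · rintro ⟨_ | c, rfl⟩
    · exact absurd (zero_nsmul m) hn
    · rw [succ_nsmul, add_tsub_cancel_right]
      exact ⟨le_add_self, c, rfl⟩
  · rintro ⟨hmn, c, hc⟩
    exact ⟨c + 1, by rw [succ_nsmul, hc, tsub_add_cancel_of_le hmn]⟩

lemma inv_one_sub_monomial_eq_one_add (hm : m ≠ 0) :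
    (1 - monomial m 1 : MvPowerSeries σ K)⁻¹ = 1 + monomial m 1 * (1 - monomial m 1)⁻¹ := by
  have hunit : constantCoeff (1 - monomial m 1 : MvPowerSeries σ K) ≠ 0 := by
    classical
    rw [← coeff_zero_eq_constantCoeff_apply, map_sub, coeff_one, coeff_monomial,
      if_pos rfl, if_neg (Ne.symm hm), sub_zero]
    exact one_ne_zero
  calc (1 - monomial m 1 : MvPowerSeries σ K)⁻¹
      = (1 - monomial m 1)⁻¹ * (1 - monomial m 1) + monomial m 1 * (1 - monomial m 1)⁻¹ := by
        ring
    _ = 1 + monomial m 1 * (1 - monomial m 1)⁻¹ := by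
        rw [MvPowerSeries.inv_mul_cancel _ hunit]

open Classical in
lemma coeff_inv_one_sub_monomial (hm : m ≠ 0) (n : σ →₀ ℕ) :
    coeff n (1 - monomial m 1 : MvPowerSeries σ K)⁻¹ = if ∃ c : ℕ, c • m = n then 1 else 0 := by
  induction n using WellFoundedLT.induction with
  | ind n ih =>
    rw [inv_one_sub_monomial_eq_one_add hm, map_add, coeff_one, coeff_monomial_mul, one_mul]
    by_cases hn : n = 0
    · subst hn
      simp [(pos_iff_ne_zero.mpr hm).not_ge]
    · rw [if_neg hn, zero_add, exists_nsmul_eq_iff_of_ne_zero hn]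
      by_cases hmn : m ≤ n
      · have hlt : n - m < n :=
          (tsub_lt_iff_left hmn).mpr (lt_add_of_pos_left n (pos_iff_ne_zero.mpr hm))
        simp [hmn, ih _ hlt]
      · simp [hmn]

end Geometric

section Product

variable {ι σ K : Type*} [Fintype ι] [Field K]

open Classical in
lemma coeff_prod_inv_one_sub_monomial (m : ι → σ →₀ ℕ)
    (hm : Function.Injective fun c : ι → ℕ => ∑ j, c j • m j) (n : σ →₀ ℕ) :
    coeff n (∏ j, (1 - monomial (m j) 1 : MvPowerSeries σ K)⁻¹) =
      if ∃ c : ι → ℕ, ∑ j, c j • m j = n then 1 else 0 := by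
  have hm0 (j : ι) : m j ≠ 0 := fun hj => by
    have := @hm (Pi.single j 1) 0 (by simp [hj])
    simpa using congrFun this j
  rw [coeff_prod]
  simp_rw [coeff_inv_one_sub_monomial (hm0 _), prod_boole]
  split_ifs with hn
  · obtain ⟨c, rfl⟩ := hn
    let l : ι →₀ σ →₀ ℕ := Finsupp.equivFunOnFinite.symm fun j => c j • m j
    rw [sum_eq_single_of_mem l (by simp [mem_finsuppAntidiag, l]), if_pos fun j _ => ⟨c j, rfl⟩]
    intro l' hl' hne
    refine if_neg fun h => hne ?_
    choose c' hc' using fun j => h j (mem_univ j)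
    have hc : c' = c := hm <| by
      simpa [← hc'] using (mem_finsuppAntidiag.mp hl').1
    ext1 j
    simp [← hc', hc, l]
  · refine sum_eq_zero fun l hl => if_neg fun h => hn ?_
    choose c hc using fun j => h j (mem_univ j)
    exact ⟨c, by simpa [hc] using (mem_finsuppAntidiag.mp hl).1⟩

end Product

section TailSum

variable {ι : Type*} [LinearOrder ι]

section SuccOrZero

variable [SuccOrder ι]

open Classical in
noncomputable def succOrZero (a : ι → ℕ) (i : ι) : ℕ := if IsMax i then 0 else a (succ i)

lemma succOrZero_le_of_antitone {a : ι → ℕ} (ha : Antitone a) (i : ι) :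
    succOrZero a i ≤ a i := by
  unfold succOrZero
  split_ifs
  exacts [Nat.zero_le _, ha (le_succ i)]

end SuccOrZero

variable [LocallyFiniteOrderTop ι]

def tailSum (c : ι → ℕ) (i : ι) : ℕ := ∑ j ∈ Ici i, c j

lemma antitone_tailSum (c : ι → ℕ) : Antitone (tailSum c) := fun _ _ hij =>
  sum_le_sum_of_subset (Ici_subset_Ici.mpr hij)

variable [SuccOrder ι]

lemma tailSum_eq_add_succOrZero (c : ι → ℕ) (i : ι) :
    tailSum c i = c i + succOrZero (tailSum c) i := by
  rw [tailSum, Ici_eq_cons_Ioi, sum_cons, succOrZero]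
  split_ifs with hi
  · rw [Ioi_eq_empty.mpr hi, sum_empty]
  · rw [tailSum, Ici_succ_eq_Ioi_of_not_isMax hi]

lemma tailSum_injective : Function.Injective (tailSum : (ι → ℕ) → ι → ℕ) := by
  intro c c' h
  funext i
  have hc := tailSum_eq_add_succOrZero c i
  have hc' := tailSum_eq_add_succOrZero c' i
  rw [h] at hc
  omega

lemma exists_tailSum_eq_iff [WellFoundedGT ι] {a : ι → ℕ} :
    (∃ c, tailSum c = a) ↔ Antitone a := by
  refine ⟨fun ⟨c, hc⟩ => hc ▸ antitone_tailSum c, fun ha => ⟨fun i => a i - succOrZero a i, ?_⟩⟩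
  funext i
  induction i using WellFoundedGT.induction with
  | ind i ih =>
    have hsucc : succOrZero (tailSum fun i => a i - succOrZero a i) i = succOrZero a i := by
      unfold succOrZero
      split_ifs with hi
      · rfl
      · exact ih _ (lt_succ_of_not_isMax hi)
    rw [tailSum_eq_add_succOrZero, hsucc, tsub_add_cancel_of_le (succOrZero_le_of_antitone ha i)]

end TailSum

section PrefixProducts

variable {ι : Type*} [LinearOrder ι] [LocallyFiniteOrderBot ι]

noncomputable def prefixDegree (σ : Equiv.Perm ι) (j : ι) : ι →₀ ℕ :=
  ∑ i ∈ Iic j, Finsupp.single (σ i) 1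

lemma prod_X_eq_monomial_prefixDegree {K : Type*} [Field K] (σ : Equiv.Perm ι) (j : ι) :
    ∏ i ∈ Iic j, (X (σ i) : MvPowerSeries ι K) = monomial (prefixDegree σ j) 1 := by
  simp only [X_def, prod_monomial, prod_const_one, prefixDegree]

lemma prefixDegree_apply (σ : Equiv.Perm ι) (j i : ι) :
    prefixDegree σ j (σ i) = if i ≤ j then 1 else 0 := by
  simp [prefixDegree, Finsupp.finsetSum_apply, Finsupp.single_apply]

variable [Fintype ι] [LocallyFiniteOrderTop ι]

lemma sum_smul_prefixDegree_apply (σ : Equiv.Perm ι) (c : ι → ℕ) (i : ι) :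
    (∑ j, c j • prefixDegree σ j) (σ i) = tailSum c i := by
  simp [Finsupp.finsetSum_apply, prefixDegree_apply, ← sum_filter, filter_le_eq_Ici, tailSum]

lemma sum_smul_prefixDegree_eq_iff (σ : Equiv.Perm ι) (c : ι → ℕ) (n : ι →₀ ℕ) :
    ∑ j, c j • prefixDegree σ j = n ↔ tailSum c = n ∘ σ := by
  constructor
  · rintro rfl
    exact funext fun i => (sum_smul_prefixDegree_apply σ c i).symm
  · intro h
    ext p
    obtain ⟨i, rfl⟩ := σ.surjective p
    rw [sum_smul_prefixDegree_apply, h, Function.comp_apply]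

variable [SuccOrder ι] [WellFoundedGT ι]

lemma coeff_prod_inv_one_sub_prod_X {K : Type*} [Field K] (σ : Equiv.Perm ι) (n : ι →₀ ℕ) :
    coeff n (∏ j, (1 - ∏ i ∈ Iic j, X (σ i) : MvPowerSeries ι K)⁻¹) =
      if Antitone (n ∘ σ) then 1 else 0 := by
  have hinj : Function.Injective fun c : ι → ℕ => ∑ j, c j • prefixDegree σ j :=
    fun c c' h => tailSum_injective <| funext fun i => by
      simpa only [sum_smul_prefixDegree_apply] using DFunLike.congr_fun h (σ i)
  classical
  simp_rw [prod_X_eq_monomial_prefixDegree, coeff_prod_inv_one_sub_monomial _ hinj]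
  exact if_congr ((exists_congr fun c => sum_smul_prefixDegree_eq_iff σ c n).trans
    exists_tailSum_eq_iff) rfl rfl

end PrefixProducts

lemma card_perm_comp_eq_comp {ι α : Type*} [Fintype ι] [DecidableEq ι] [DecidableEq α]
    (f : ι → α) (τ : Equiv.Perm ι) :
    Fintype.card {σ : Equiv.Perm ι // f ∘ σ = f ∘ τ} =
      Fintype.card {σ : Equiv.Perm ι // f ∘ σ = f} :=
  Fintype.card_congr <| (Equiv.mulRight τ⁻¹).subtypeEquiv fun σ => by
    rw [Equiv.coe_mulRight, Equiv.Perm.coe_mul, Equiv.Perm.coe_inv, ← Function.comp_assoc,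
      Equiv.comp_symm_eq]

lemma card_perm_antitone_comp {n : ℕ} {α : Type*} [LinearOrder α] (f : Fin n → α)
    [DecidablePred fun σ : Equiv.Perm (Fin n) => Antitone (f ∘ σ)] :
    #{σ : Equiv.Perm (Fin n) | Antitone (f ∘ σ)} =
      ∏ a ∈ univ.image f, (#{i | f i = a}).factorial := by
  set τ := Tuple.sort (OrderDual.toDual ∘ f)
  have hsort (σ : Equiv.Perm (Fin n)) : Antitone (f ∘ σ) ↔ f ∘ σ = f ∘ τ := by
    rw [← monotone_toDual_comp_iff, ← Function.comp_assoc,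
      ← Tuple.comp_sort_eq_comp_iff_monotone, Function.comp_assoc, Function.comp_assoc]
    exact OrderDual.toDual.injective.comp_left.eq_iff
  simp_rw [hsort, ← Fintype.card_subtype, card_perm_comp_eq_comp, DomMulAct.stabilizer_card']

theorem symmetrized_lhs_coefficient (k : ℕ) (γ : Fin k →₀ ℕ) :
    MvPowerSeries.coeff (R := ℚ) γ
        (∑ σ : Equiv.Perm (Fin k),
          ∏ j : Fin k, (1 - ∏ i ∈ Finset.Iic j, MvPowerSeries.X (σ i))⁻¹) =
      ∏ j ∈ Finset.image (⇑γ) Finset.univ,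
        (Nat.factorial ((Finset.univ.filter (fun i => γ i = j)).card) : ℚ) := by
  rw [map_sum, ← Nat.cast_prod, ← card_perm_antitone_comp]
  simp_rw [coeff_prod_inv_one_sub_prod_X]
  exact_mod_cast sum_boole _ _
end

section
/- For every positive integer k, as formal power series (or for |x| < 1): ∏_{j=1}^k 1/(1-x^j) = Σ_{λ ⊢ k} 1/(∏_{m≥1} m^{f_m(λ)} f_m(λ)!) · ∏_{m≥1} 1/(1-x^m)^{f_m(λ)}, where f_m(λ) is the number of parts of λ equal to m. -/
open Finset PowerSeries
open scoped Nat

/-!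
Write `z_λ = ∏ m ^ f_m f_m!` and, for a sequence `p`, `Z_k(p) = ∑_{λ ⊢ k} p_λ / z_λ`, the cycle
index of `S_k`. Removing one part `m` of `λ` multiplies `1 / z_λ` by `m f_m`, which gives Newton's
recursion `k Z_k(p) = ∑_{m=1}^k p_m Z_{k-m}(p)`; it determines `Z(p)` from `Z_0 = 1`. The Cauchy
product of `Z(p)` and `Z(q)` satisfies the recursion for `p + q`, so `Z(p + q) = Z(p) Z(q)`; also
`Z(1) = 1` and `Z_k(c ^ m p_m) = c ^ k Z_k(p)`. For `p_m = 1 / (1 - x ^ m) = x ^ m p_m + 1` this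
gives `Z_k(p) = ∑_{i ≤ k} x ^ i Z_i(p)`, i.e. `(1 - x ^ k) Z_k(p) = Z_{k-1}(p)`, and the theorem
follows by induction on `k`.
-/

lemma Multiset.prod_map_pow_eq_pow_sum {M : Type*} [CommMonoid M] (c : M) (s : Multiset ℕ) :
    (s.map (c ^ ·)).prod = c ^ s.sum := by
  induction s using Multiset.induction_on with
  | empty => simp
  | cons a s ih => simp [ih, pow_add]

lemma Multiset.prod_map_eq_prod_pow_count_of_subset {M : Type*} [CommMonoid M] (f : ℕ → M)
    {s : Multiset ℕ} {F : Finset ℕ} (h : s.toFinset ⊆ F) :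
    (s.map f).prod = ∏ m ∈ F, f m ^ s.count m := by
  rw [prod_multiset_map_count]
  exact prod_subset h fun m _ hm => by simp [Multiset.count_eq_zero.2 (by simpa using hm)]

-- `z_λ`, the order of the centralizer in `S_k` of a permutation of cycle type `λ`
def centralizerOrder (s : Multiset ℕ) : ℕ :=
  ∏ m ∈ s.toFinset, m ^ s.count m * (s.count m)!

lemma centralizerOrder_eq_prod_of_subset {s : Multiset ℕ} {F : Finset ℕ} (h : s.toFinset ⊆ F) :
    centralizerOrder s = ∏ m ∈ F, m ^ s.count m * (s.count m)! :=
  prod_subset h fun m _ hm => by simp [Multiset.count_eq_zero.2 (by simpa using hm)]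

lemma centralizerOrder_cons (m : ℕ) (t : Multiset ℕ) :
    centralizerOrder (m ::ₘ t) = m * (t.count m + 1) * centralizerOrder t := by
  have hm : m ∈ (m ::ₘ t).toFinset := by simp
  have hrest : ∏ x ∈ (m ::ₘ t).toFinset.erase m, x ^ (m ::ₘ t).count x * ((m ::ₘ t).count x)! =
      ∏ x ∈ (m ::ₘ t).toFinset.erase m, x ^ t.count x * (t.count x)! :=
    prod_congr rfl fun x hx => by rw [Multiset.count_cons_of_ne (ne_of_mem_erase hx)]
  rw [centralizerOrder, centralizerOrder_eq_prod_of_subset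
      (by simp [Multiset.toFinset_cons, subset_insert] : t.toFinset ⊆ (m ::ₘ t).toFinset),
    ← mul_prod_erase _ _ hm, ← mul_prod_erase _ _ hm, hrest, Multiset.count_cons_self,
    Nat.factorial_succ]
  ring

lemma centralizerOrder_inv_mul_count_mul {s : Multiset ℕ} {m : ℕ} (hm : m ∈ s) (hm0 : m ≠ 0) :
    (centralizerOrder s : ℚ)⁻¹ * (s.count m * m) = (centralizerOrder (s.erase m) : ℚ)⁻¹ := by
  obtain ⟨t, rfl⟩ := Multiset.exists_cons_of_mem hm
  have hc : (m * (t.count m + 1) : ℚ) ≠ 0 := by positivity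
  rw [centralizerOrder_cons, Multiset.erase_cons_head, Multiset.count_cons_self]
  push_cast
  rw [mul_inv, mul_right_comm, mul_comm _ (m : ℚ), inv_mul_cancel₀ hc, one_mul]

def partitionParts (k : ℕ) : Finset (Multiset ℕ) :=
  univ.image (Nat.Partition.parts (n := k))

lemma mem_partitionParts {k : ℕ} {s : Multiset ℕ} :
    s ∈ partitionParts k ↔ (∀ m ∈ s, 0 < m) ∧ s.sum = k := by
  refine ⟨?_, fun ⟨hpos, hsum⟩ => mem_image.2 ⟨⟨s, fun {m} => hpos m, hsum⟩, mem_univ _, rfl⟩⟩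
  intro hs
  obtain ⟨P, -, rfl⟩ := mem_image.1 hs
  exact ⟨fun m => P.parts_pos, P.parts_sum⟩

lemma partitionParts_zero : partitionParts 0 = {0} := by
  ext s
  simp only [mem_partitionParts, mem_singleton, Multiset.sum_eq_zero_iff]
  refine ⟨fun ⟨hpos, hzero⟩ => Multiset.eq_zero_of_forall_notMem fun m hm => ?_, ?_⟩
  · exact (hpos m hm).ne' (hzero m hm)
  · rintro rfl
    simp

lemma filter_mem_partitionParts {k m : ℕ} (hm : 0 < m) (hmk : m ≤ k) :
    (partitionParts k).filter (m ∈ ·) = (partitionParts (k - m)).image (m ::ₘ ·) := by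
  ext s
  simp only [mem_filter, mem_image, mem_partitionParts]
  constructor
  · rintro ⟨⟨hpos, hsum⟩, hms⟩
    refine ⟨s.erase m, ⟨fun p hp => hpos p (Multiset.mem_of_mem_erase hp), ?_⟩,
      Multiset.cons_erase hms⟩
    have := Multiset.sum_cons m (s.erase m)
    rw [Multiset.cons_erase hms] at this
    omega
  · rintro ⟨t, ⟨hpos, hsum⟩, rfl⟩
    refine ⟨⟨fun p hp => ?_, by rw [Multiset.sum_cons, hsum]; omega⟩, Multiset.mem_cons_self _ _⟩
    rcases Multiset.mem_cons.1 hp with rfl | hp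
    exacts [hm, hpos p hp]

section CycleIndex

variable {A : Type*} [CommRing A] [Algebra ℚ A]

def cycleIndex (p : ℕ → A) (k : ℕ) : A :=
  ∑ s ∈ partitionParts k, (centralizerOrder s : ℚ)⁻¹ • (s.map p).prod

lemma cycleIndex_zero (p : ℕ → A) : cycleIndex p 0 = 1 := by
  simp [cycleIndex, partitionParts_zero, centralizerOrder]

lemma cycleIndex_congr {p q : ℕ → A} (h : ∀ m, 0 < m → p m = q m) (k : ℕ) :
    cycleIndex p k = cycleIndex q k :=
  sum_congr rfl fun s hs => by
    rw [Multiset.map_congr rfl fun m hm => h m ((mem_partitionParts.1 hs).1 m hm)]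

theorem nsmul_cycleIndex (p : ℕ → A) (k : ℕ) :
    k • cycleIndex p k = ∑ m ∈ Icc 1 k, p m * cycleIndex p (k - m) := by
  calc k • cycleIndex p k
      = ∑ s ∈ partitionParts k, ∑ m ∈ s.toFinset,
          ((centralizerOrder s : ℚ)⁻¹ * (s.count m * m)) • (s.map p).prod := by
        rw [cycleIndex, smul_sum]
        refine sum_congr rfl fun s hs => ?_
        have hk : (k : ℚ) = ∑ m ∈ s.toFinset, (s.count m * m : ℚ) := by
          rw [← (mem_partitionParts.1 hs).2, sum_multiset_count]
          push_cast
          simp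
        rw [← sum_smul, ← mul_sum, ← hk, ← Nat.cast_smul_eq_nsmul ℚ, smul_smul, mul_comm]
    _ = ∑ m ∈ Icc 1 k, ∑ s ∈ (partitionParts k).filter (m ∈ ·),
          ((centralizerOrder s : ℚ)⁻¹ * (s.count m * m)) • (s.map p).prod := by
        refine sum_comm' fun s m => ?_
        simp only [Multiset.mem_toFinset, mem_filter, mem_Icc, mem_partitionParts]
        constructor
        · rintro ⟨⟨hpos, rfl⟩, hm⟩
          exact ⟨⟨⟨hpos, rfl⟩, hm⟩, hpos m hm, Multiset.le_sum_of_mem hm⟩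
        · rintro ⟨h, -⟩
          exact h
    _ = ∑ m ∈ Icc 1 k, p m * cycleIndex p (k - m) := by
        refine sum_congr rfl fun m hm => ?_
        obtain ⟨hm1, hmk⟩ := mem_Icc.1 hm
        rw [filter_mem_partitionParts hm1 hmk,
          sum_image fun _ _ _ _ => (Multiset.cons_inj_right m).1, cycleIndex, mul_sum]
        refine sum_congr rfl fun t _ => ?_
        rw [centralizerOrder_inv_mul_count_mul (Multiset.mem_cons_self m t) (by omega),
          Multiset.erase_cons_head, Multiset.map_cons, Multiset.prod_cons, mul_smul_comm]

theorem eq_cycleIndex_of_nsmul_eq {p f : ℕ → A} (h0 : f 0 = 1)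
    (hrec : ∀ k, k • f k = ∑ m ∈ Icc 1 k, p m * f (k - m)) (k : ℕ) :
    f k = cycleIndex p k := by
  induction k using Nat.strong_induction_on with
  | _ k ih =>
    rcases k.eq_zero_or_pos with rfl | hk
    · rw [h0, cycleIndex_zero]
    · have h : (k : ℚ) • f k = (k : ℚ) • cycleIndex p k := by
        simp only [Nat.cast_smul_eq_nsmul]
        rw [hrec, nsmul_cycleIndex]
        exact sum_congr rfl fun m hm => by rw [ih _ (by simp at hm; omega)]
      exact smul_right_injective A (by positivity : (k : ℚ) ≠ 0) h

lemma sum_antidiagonal_sum_Icc_mul {R : Type*} [CommSemiring R] (p a b : ℕ → R) (k : ℕ) :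
    ∑ x ∈ antidiagonal k, (∑ m ∈ Icc 1 x.1, p m * a (x.1 - m)) * b x.2 =
      ∑ m ∈ Icc 1 k, p m * ∑ x ∈ antidiagonal (k - m), a x.1 * b x.2 := by
  simp_rw [sum_mul, mul_sum]
  rw [sum_comm' (t' := Icc 1 k) (s' := fun m => (antidiagonal k).filter (m ≤ ·.1))]
  · refine sum_congr rfl fun m hm => ?_
    rw [Nat.antidiagonal_filter_le_fst_of_le (by simp at hm; omega), sum_map]
    refine sum_congr rfl fun x _ => ?_
    simp [mul_assoc]
  · intro x m
    simp only [HasAntidiagonal.mem_antidiagonal, mem_Icc, mem_filter]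
    omega

theorem cycleIndex_add (p q : ℕ → A) (k : ℕ) :
    cycleIndex (p + q) k = ∑ x ∈ antidiagonal k, cycleIndex p x.1 * cycleIndex q x.2 := by
  set conv : ℕ → A := fun k => ∑ x ∈ antidiagonal k, cycleIndex p x.1 * cycleIndex q x.2
  have conv_swap (k : ℕ) : conv k = ∑ x ∈ antidiagonal k, cycleIndex q x.1 * cycleIndex p x.2 := by
    rw [← Nat.sum_antidiagonal_swap]
    simp only [conv, Prod.fst_swap, Prod.snd_swap, mul_comm]
  refine (eq_cycleIndex_of_nsmul_eq (f := conv) (by simp [conv, cycleIndex_zero])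
    (fun k => ?_) k).symm
  calc k • conv k
      = ∑ x ∈ antidiagonal k, (x.1 • cycleIndex p x.1) * cycleIndex q x.2 +
          ∑ x ∈ antidiagonal k, (x.2 • cycleIndex q x.2) * cycleIndex p x.1 := by
        rw [← sum_add_distrib, smul_sum]
        refine sum_congr rfl fun x hx => ?_
        rw [← HasAntidiagonal.mem_antidiagonal.1 hx, add_smul, smul_mul_assoc, smul_mul_assoc,
          mul_comm (cycleIndex q _)]
    _ = ∑ m ∈ Icc 1 k, p m * conv (k - m) + ∑ m ∈ Icc 1 k, q m * conv (k - m) := by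
        simp_rw [nsmul_cycleIndex]
        rw [← Nat.sum_antidiagonal_swap (f := fun x => (∑ m ∈ Icc 1 x.2, _) * _)]
        simp only [Prod.fst_swap, Prod.snd_swap]
        rw [sum_antidiagonal_sum_Icc_mul, sum_antidiagonal_sum_Icc_mul]
        simp only [← conv_swap]; rfl
    _ = ∑ m ∈ Icc 1 k, (p + q) m * conv (k - m) := by
        rw [← sum_add_distrib]
        simp only [Pi.add_apply, add_mul]

theorem cycleIndex_one (k : ℕ) : cycleIndex (1 : ℕ → A) k = 1 :=
  (eq_cycleIndex_of_nsmul_eq (f := 1) rfl (fun k => by simp) k).symm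

theorem cycleIndex_pow_mul (c : A) (p : ℕ → A) (k : ℕ) :
    cycleIndex (fun m => c ^ m * p m) k = c ^ k * cycleIndex p k := by
  rw [cycleIndex, cycleIndex, mul_sum]
  refine sum_congr rfl fun s hs => ?_
  rw [Multiset.prod_map_mul, Multiset.prod_map_pow_eq_pow_sum, (mem_partitionParts.1 hs).2,
    mul_smul_comm]

end CycleIndex

section Geometric

variable {K : Type*} [Field K] [CharZero K]

theorem cycleIndex_inv_one_sub_X_pow_eq_sum (k : ℕ) :
    cycleIndex (fun m => (1 - X ^ m : K⟦X⟧)⁻¹) k =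
      ∑ i ∈ range (k + 1), X ^ i * cycleIndex (fun m => (1 - X ^ m : K⟦X⟧)⁻¹) i := by
  -- at `m = 0` the inverse is the junk value `0`, so the splitting only holds for positive parts
  have hsplit : ∀ m, 0 < m →
      (1 - X ^ m : K⟦X⟧)⁻¹ = ((fun m => X ^ m * (1 - X ^ m)⁻¹) + 1 : ℕ → K⟦X⟧) m := by
    intro m hm
    have hunit : (1 - X ^ m : K⟦X⟧) * (1 - X ^ m)⁻¹ = 1 :=
      PowerSeries.mul_inv_cancel _ (by simp [zero_pow hm.ne'])
    simp only [Pi.add_apply, Pi.one_apply]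
    linear_combination hunit
  rw [cycleIndex_congr hsplit, cycleIndex_add, Nat.sum_antidiagonal_eq_sum_range_succ_mk]
  simp only [cycleIndex_pow_mul, cycleIndex_one, mul_one]

theorem prod_inv_one_sub_X_pow_eq_cycleIndex (k : ℕ) :
    ∏ j ∈ Icc 1 k, (1 - X ^ j : K⟦X⟧)⁻¹ = cycleIndex (fun m => (1 - X ^ m : K⟦X⟧)⁻¹) k := by
  induction k with
  | zero => simp [cycleIndex_zero]
  | succ k ih =>
    have hrec := cycleIndex_inv_one_sub_X_pow_eq_sum (K := K) (k + 1)
    rw [sum_range_succ, ← cycleIndex_inv_one_sub_X_pow_eq_sum] at hrec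
    have hunit : (1 - X ^ (k + 1) : K⟦X⟧) * (1 - X ^ (k + 1))⁻¹ = 1 :=
      PowerSeries.mul_inv_cancel _ (by simp)
    rw [prod_Icc_succ_top (by omega), ih]
    linear_combination (-(1 - X ^ (k + 1) : K⟦X⟧)⁻¹) * hrec +
      cycleIndex (fun m => (1 - X ^ m : K⟦X⟧)⁻¹) (k + 1) * hunit

end Geometric

theorem macmahon_partial_fractions_general (k : ℕ) :
    ∏ j ∈ Finset.Icc 1 k, (1 - (PowerSeries.X : PowerSeries ℚ) ^ j)⁻¹ =
      ∑ P : Nat.Partition k,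
        (PowerSeries.C (R := ℚ))
            (1 / ∏ m ∈ Finset.Icc 1 k,
              ((m : ℚ) ^ (P.parts.count m) * (Nat.factorial (P.parts.count m) : ℚ))) *
          ∏ m ∈ Finset.Icc 1 k,
            ((1 - (PowerSeries.X : PowerSeries ℚ) ^ m)⁻¹) ^ (P.parts.count m) := by
  rw [prod_inv_one_sub_X_pow_eq_cycleIndex, cycleIndex, partitionParts,
    sum_image fun _ _ _ _ => Nat.Partition.ext]
  refine sum_congr rfl fun P _ => ?_
  have hP : P.parts.toFinset ⊆ Icc 1 k := fun m hm => by
    rw [Multiset.mem_toFinset] at hm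
    exact mem_Icc.2 ⟨P.parts_pos hm, P.parts_sum ▸ Multiset.le_sum_of_mem hm⟩
  rw [smul_eq_C_mul, centralizerOrder_eq_prod_of_subset hP,
    Multiset.prod_map_eq_prod_pow_count_of_subset _ hP, one_div]
  push_cast
  rfl

theorem macmahon_partial_fractions (k : ℕ) (hk : 0 < k) :
    ∏ j ∈ Finset.Icc 1 k, (1 - (PowerSeries.X : PowerSeries ℚ) ^ j)⁻¹ =
      ∑ P : Nat.Partition k,
        (PowerSeries.C (R := ℚ))
            (1 / ∏ m ∈ Finset.Icc 1 k,
              ((m : ℚ) ^ (P.parts.count m) * (Nat.factorial (P.parts.count m) : ℚ))) *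
          ∏ m ∈ Finset.Icc 1 k,
            ((1 - (PowerSeries.X : PowerSeries ℚ) ^ m)⁻¹) ^ (P.parts.count m) :=
  macmahon_partial_fractions_general k
end
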